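/- Let α and δ be linear maps on real sequences. Then: (1) the operator (ω,x) ↦ (αω, 0) is bounded on Z₂ if and only if α is bounded from ℓ_f* to ℓ², i.e., there is a constant C such that for every ω ∈ ℓ_f*, αω ∈ ℓ² and ‖αω‖₂ ≤ C‖ω‖_{ℓ_f*}; (2) the operator (ω,x) ↦ (0, δω) is bounded on Z₂ if and only if δ is bounded from ℓ_f* to ℓ_f, i.e., there is a constant C such that for every ω ∈ ℓ_f*, δω ∈ ℓ², KP(δω) ∈ ℓ², and ‖KP(δω)‖₂ + ‖δω‖₂ ≤ C‖ω‖_{ℓ_f*}. -/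

import Mathlib

/-!
Both operators factor through the first coordinate: `T (ω, x) = F ω`. Since `ℓ_f*` is the
projection of `Z₂` onto its first coordinate and `‖ω‖_{ℓ_f*}` is the infimum of `‖(ω, x)‖_{Z₂}`
over the admissible `x`, an estimate `‖F ω‖_{Z₂} ≤ C ‖(ω, x)‖_{Z₂}` holding for every such `x`
is the same as `‖F ω‖_{Z₂} ≤ C ‖ω‖_{ℓ_f*}`. Finally `‖(y, 0)‖_{Z₂} = ‖y‖₂` and
`‖(0, y)‖_{Z₂} = ‖y‖_{ℓ_f}`.
-/

open scoped BigOperators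

noncomputable section

/-- Real sequences. -/
abbrev RSeq : Type := ℕ → ℝ

/-- Membership in ℓ². -/
def memL2 (x : RSeq) : Prop := Summable (fun n => (x n) ^ 2)

/-- The ℓ² norm. -/
noncomputable def l2norm (x : RSeq) : ℝ := Real.sqrt (∑' n, (x n) ^ 2)

/-- The Kalton–Peck map, defined coordinatewise.  (In Lean, `Real.log 0 = 0` and
division by zero is zero, so the conventions `0·log 0 = 0` and `KP 0 = 0` hold.) -/
noncomputable def KP (x : RSeq) : RSeq := fun n => 2 * x n * Real.log (|x n| / l2norm x)

/-- Membership in the Kalton–Peck space Z₂. -/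
def memZ2 (u : RSeq × RSeq) : Prop := memL2 u.2 ∧ memL2 (u.1 - KP u.2)

/-- The Z₂ quasinorm. -/
noncomputable def Z2norm (u : RSeq × RSeq) : ℝ := l2norm (u.1 - KP u.2) + l2norm u.2

/-- A map on pairs of sequences is bounded on Z₂. -/
def BoundedOnZ2 (T : RSeq × RSeq → RSeq × RSeq) : Prop :=
  (∀ u, memZ2 u → memZ2 (T u)) ∧ ∃ C : ℝ, ∀ u, memZ2 u → Z2norm (T u) ≤ C * Z2norm u

/-- The matrix operator associated to four linear maps on sequences. -/
def matOp (α β δ γ : RSeq →ₗ[ℝ] RSeq) : RSeq × RSeq → RSeq × RSeq :=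
  fun u => (α u.1 + β u.2, δ u.1 + γ u.2)

/-- Membership in the Orlicz space ℓ_f = Dom KP. -/
def memLf (x : RSeq) : Prop := memL2 x ∧ memL2 (KP x)

/-- The ℓ_f quasinorm. -/
noncomputable def lfNorm (x : RSeq) : ℝ := l2norm (KP x) + l2norm x

/-- Membership in ℓ_f* = Ran KP. -/
def memLfStar (ω : RSeq) : Prop := ∃ x : RSeq, memL2 x ∧ memL2 (ω - KP x)

/-- The ℓ_f* quasinorm. -/
noncomputable def lfStarNorm (ω : RSeq) : ℝ :=
  sInf {r : ℝ | ∃ x : RSeq, memL2 x ∧ memL2 (ω - KP x) ∧ r = l2norm (ω - KP x) + l2norm x}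

/-- A bounded map on Z₂ is strictly singular if every linear subspace of Z₂ on which it is
bounded below is finite dimensional. -/
def StrictlySingular (T : RSeq × RSeq → RSeq × RSeq) : Prop :=
  ∀ V : Submodule ℝ (RSeq × RSeq), (∀ v ∈ V, memZ2 v) →
    (∃ c > 0, ∀ v ∈ V, c * Z2norm v ≤ Z2norm (T v)) → FiniteDimensional ℝ V

/-- A set of sequences is totally bounded (relatively compact) for the ℓ² norm. -/
def l2TotallyBounded (A : Set RSeq) : Prop :=
  ∀ ε > 0, ∃ S : Set RSeq, S.Finite ∧
    ∀ a ∈ A, ∃ s ∈ S, memL2 (a - s) ∧ l2norm (a - s) < ε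

/-- A map on Z₂ is compact if the image of the unit ball is totally bounded for the
Z₂ quasinorm. -/
def CompactOnZ2 (T : RSeq × RSeq → RSeq × RSeq) : Prop :=
  ∀ ε > 0, ∃ S : Set (RSeq × RSeq), S.Finite ∧
    ∀ u, memZ2 u → Z2norm u ≤ 1 → ∃ s ∈ S, memZ2 (T u - s) ∧ Z2norm (T u - s) < ε

lemma l2norm_nonneg (x : RSeq) : 0 ≤ l2norm x := Real.sqrt_nonneg _

lemma memL2_zero : memL2 0 := by
  simp [memL2, summable_zero]

lemma memL2_neg {y : RSeq} : memL2 (-y) ↔ memL2 y := by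
  simp only [memL2, Pi.neg_apply, neg_sq]

lemma l2norm_neg (y : RSeq) : l2norm (-y) = l2norm y := by
  simp only [l2norm, Pi.neg_apply, neg_sq]

lemma KP_zero : KP 0 = 0 := by
  funext n
  simp [KP]

lemma l2norm_zero : l2norm 0 = 0 := by
  simp [l2norm]

lemma Z2norm_nonneg (u : RSeq × RSeq) : 0 ≤ Z2norm u :=
  add_nonneg (l2norm_nonneg _) (l2norm_nonneg _)

lemma memZ2_mk_zero {y : RSeq} : memZ2 (y, 0) ↔ memL2 y := by
  simp [memZ2, KP_zero, memL2_zero]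

lemma Z2norm_mk_zero (y : RSeq) : Z2norm (y, 0) = l2norm y := by
  simp [Z2norm, KP_zero, l2norm_zero]

lemma memZ2_zero_mk {y : RSeq} : memZ2 (0, y) ↔ memL2 y ∧ memL2 (KP y) := by
  simp [memZ2, memL2_neg]

lemma Z2norm_zero_mk (y : RSeq) : Z2norm (0, y) = lfNorm y := by
  simp [Z2norm, lfNorm, l2norm_neg]

lemma memLfStar_of_memZ2 {u : RSeq × RSeq} (hu : memZ2 u) : memLfStar u.1 :=
  ⟨u.2, hu⟩

lemma lfStarNorm_nonneg (ω : RSeq) : 0 ≤ lfStarNorm ω := by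
  refine Real.sInf_nonneg ?_
  rintro r ⟨x, -, -, rfl⟩
  exact Z2norm_nonneg (ω, x)

lemma lfStarNorm_le_Z2norm {u : RSeq × RSeq} (hu : memZ2 u) : lfStarNorm u.1 ≤ Z2norm u := by
  refine csInf_le ⟨0, ?_⟩ ⟨u.2, hu.1, hu.2, rfl⟩
  rintro r ⟨x, -, -, rfl⟩
  exact Z2norm_nonneg (u.1, x)

lemma le_mul_lfStarNorm {ω : RSeq} {a C : ℝ} (hC : 0 < C) (hω : memLfStar ω)
    (h : ∀ x, memZ2 (ω, x) → a ≤ C * Z2norm (ω, x)) : a ≤ C * lfStarNorm ω := by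
  obtain ⟨x₀, hx₀, hωx₀⟩ := hω
  rw [← div_le_iff₀' hC]
  refine le_csInf ⟨_, x₀, hx₀, hωx₀, rfl⟩ ?_
  rintro r ⟨x, hx, hωx, rfl⟩
  exact (div_le_iff₀' hC).2 (h x ⟨hx, hωx⟩)

theorem boundedOnZ2_comp_fst_iff (F : RSeq → RSeq × RSeq) :
    BoundedOnZ2 (fun u => F u.1) ↔
      ∃ C : ℝ, ∀ ω, memLfStar ω → memZ2 (F ω) ∧ Z2norm (F ω) ≤ C * lfStarNorm ω := by
  constructor
  · rintro ⟨hmem, C, hC⟩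
    refine ⟨max C 1, fun ω hω => ⟨?_, ?_⟩⟩
    · obtain ⟨x, hx⟩ := hω
      exact hmem (ω, x) hx
    · refine le_mul_lfStarNorm (by positivity) hω fun x hx => ?_
      exact (hC _ hx).trans (mul_le_mul_of_nonneg_right (le_max_left C 1) (Z2norm_nonneg _))
  · rintro ⟨C, hC⟩
    refine ⟨fun u hu => (hC u.1 (memLfStar_of_memZ2 hu)).1, max C 0, fun u hu => ?_⟩
    calc Z2norm (F u.1) ≤ C * lfStarNorm u.1 := (hC u.1 (memLfStar_of_memZ2 hu)).2
      _ ≤ max C 0 * lfStarNorm u.1 :=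
        mul_le_mul_of_nonneg_right (le_max_left C 0) (lfStarNorm_nonneg _)
      _ ≤ max C 0 * Z2norm u :=
        mul_le_mul_of_nonneg_left (lfStarNorm_le_Z2norm hu) (le_max_right C 0)

/-- (1) (ω,x) ↦ (αω, 0) is bounded on Z₂ iff α is bounded from ℓ_f* to ℓ²;
(2) (ω,x) ↦ (0, δω) is bounded on Z₂ iff δ is bounded from ℓ_f* to ℓ_f. -/
theorem stmt_12 (α δ : RSeq →ₗ[ℝ] RSeq) :
    (BoundedOnZ2 (fun u : RSeq × RSeq => (α u.1, (0 : RSeq))) ↔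
      ∃ C : ℝ, ∀ ω : RSeq, memLfStar ω →
        memL2 (α ω) ∧ l2norm (α ω) ≤ C * lfStarNorm ω) ∧
    (BoundedOnZ2 (fun u : RSeq × RSeq => ((0 : RSeq), δ u.1)) ↔
      ∃ C : ℝ, ∀ ω : RSeq, memLfStar ω →
        memL2 (δ ω) ∧ memL2 (KP (δ ω)) ∧
        l2norm (KP (δ ω)) + l2norm (δ ω) ≤ C * lfStarNorm ω) := by
  constructor
  · simpa only [memZ2_mk_zero, Z2norm_mk_zero] using
      boundedOnZ2_comp_fst_iff fun ω => (α ω, 0)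
  · simpa only [memZ2_zero_mk, Z2norm_zero_mk, lfNorm, and_assoc] using
      boundedOnZ2_comp_fst_iff fun ω => (0, δ ω)
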